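/- Cocycle property of re-expansion: for points p, q, s with P(q,r') ⊆ P(p,r) and P(s,r'') ⊆ P(q,r'), the re-expansion homomorphisms satisfy α(q,s) ∘ α(p,q) = α(p,s) on convergent noncommutative power series centered at p and converging on P(p,r). -/

import Mathlib

/-- `(I choose J)`: the number of order-preserving injective letter-respecting
maps from `J` to `I`. -/
noncomputable def chooseCount {n : ℕ} (I J : List (Fin n)) : ℕ :=
  Set.ncard {α : Fin J.length → Fin I.length |
    StrictMono α ∧ ∀ k, J.get k = I.get (α k)}

/-- `w^I`: product of the values of `w` over the letters of the word `I`. -/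
def wprod {n : ℕ} (w : Fin n → ℂ) (I : List (Fin n)) : ℂ := (I.map w).prod

/-- `(q−p)^{I−J}` (multiset difference of letters; independent of embedding). -/
noncomputable def diffProd {n : ℕ} (p q : Fin n → ℂ) (I J : List (Fin n)) : ℂ :=
  (((I : Multiset (Fin n)) - (J : Multiset (Fin n))).map
    fun i => q i - p i).prod

/-- The re-expansion map `α(p,q)`: the coefficient of `α(p,q)(f)` at a word `J`
is `a_J(q) = Σ_{I ≥ J} (I choose J) a_I (q−p)^{I−J}`. -/
noncomputable def reExp {n : ℕ} (p q : Fin n → ℂ) (a : List (Fin n) → ℂ) :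
    List (Fin n) → ℂ :=
  fun J => ∑' I : List (Fin n), (chooseCount I J : ℂ) * a I * diffProd p q I J

/-!
With `u = q - p` and `v = s - q`, the coefficient of `α(q,s) (α(p,q) f)` at `J` is the double sum
`Σ_I Σ_K (I choose K) (K choose J) a_I u^(I-K) v^(K-J)`. Summing over `K` first, the
noncommutative Vandermonde identity
`Σ_K (I choose K) (K choose J) u^(I-K) v^(K-J) = (I choose J) (u+v)^(I-J)`
(by induction on `I`, splitting occurrences according to whether they use the first letter)
turns it into the coefficient of `α(p,s) f`, since `u + v = s - p`.

The interchange of summations is justified by the same identity for `‖u‖, ‖v‖`: the absolute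
double sum is `Σ_I (I choose J) ‖a_I‖ (‖u‖+‖v‖)^(I-J)`. Nesting of the polydiscs forces
`‖u_i‖ + ‖v_i‖ < r_i`, and the case `J = []` of the identity gives the binomial bound
`(I choose J) w^(I-J) t^J ≤ (w+t)^I`, which dominates this series by a convergent one.
-/

variable {n : ℕ}

theorem Fin.strictMono_succ_comp_iff {α : Type*} [Preorder α] {m : ℕ} {β : α → Fin m} :
    StrictMono (Fin.succ ∘ β) ↔ StrictMono β :=
  ⟨fun h _ _ hab => Fin.succ_lt_succ_iff.1 (h hab), Fin.strictMono_succ.comp⟩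

theorem Fin.exists_succ_comp_of_forall_ne_zero {m l : ℕ} {α : Fin m → Fin (l + 1)}
    (h : ∀ k, α k ≠ 0) : ∃ β : Fin m → Fin l, α = Fin.succ ∘ β :=
  Set.range_subset_range_iff_exists_comp.1 <| by
    rw [Fin.range_succ]; rintro _ ⟨k, rfl⟩; exact h k

theorem StrictMono.exists_succ_comp_of_ne_zero {m l : ℕ} {α : Fin (m + 1) → Fin (l + 1)}
    (hα : StrictMono α) (h0 : α 0 ≠ 0) :
    ∃ β : Fin (m + 1) → Fin l, α = Fin.succ ∘ β :=
  Fin.exists_succ_comp_of_forall_ne_zero fun k =>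
    Fin.pos_iff_ne_zero.1 <| (Fin.pos_iff_ne_zero.2 h0).trans_le (hα.monotone (Fin.zero_le k))

theorem StrictMono.exists_cons_zero_succ_comp {m l : ℕ} {α : Fin (m + 1) → Fin (l + 1)}
    (hα : StrictMono α) (h0 : α 0 = 0) :
    ∃ γ : Fin m → Fin l, α = Fin.cons 0 (Fin.succ ∘ γ) := by
  obtain ⟨γ, hγ⟩ := Fin.exists_succ_comp_of_forall_ne_zero (α := Fin.tail α) fun k =>
    Fin.pos_iff_ne_zero.1 <| h0 ▸ hα (Fin.succ_pos k)
  exact ⟨γ, by rw [← Fin.cons_self_tail α, h0, hγ]⟩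

def subwordEmbeddings (I J : List (Fin n)) : Set (Fin J.length → Fin I.length) :=
  {α | StrictMono α ∧ ∀ k, J.get k = I.get (α k)}

theorem chooseCount_eq_ncard (I J : List (Fin n)) :
    chooseCount I J = (subwordEmbeddings I J).ncard := rfl

theorem chooseCount_nil_right (I : List (Fin n)) : chooseCount I [] = 1 := by
  rw [chooseCount_eq_ncard, Set.ncard_eq_one]
  exact ⟨Fin.elim0, Set.eq_singleton_iff_unique_mem.2
    ⟨⟨fun a => a.elim0, fun k => k.elim0⟩, fun _ _ => funext fun k => k.elim0⟩⟩

theorem List.Sublist.of_chooseCount_ne_zero {I J : List (Fin n)} (h : chooseCount I J ≠ 0) :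
    J.Sublist I := by
  obtain ⟨α, hmono, hget⟩ := Set.nonempty_of_ncard_ne_zero h
  exact List.sublist_iff_exists_fin_orderEmbedding_get_eq.2
    ⟨OrderEmbedding.ofStrictMono α hmono, hget⟩

theorem coe_le_coe_of_chooseCount_ne_zero {I J : List (Fin n)} (h : chooseCount I J ≠ 0) :
    (J : Multiset (Fin n)) ≤ I :=
  Multiset.coe_le.2 (List.Sublist.of_chooseCount_ne_zero h).subperm

theorem finite_support_chooseCount (I : List (Fin n)) :
    (Function.support (chooseCount I)).Finite :=
  I.sublists.toFinset.finite_toSet.subset fun K hK => by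
    simpa using List.Sublist.of_chooseCount_ne_zero hK

theorem succ_comp_mem_subwordEmbeddings_cons {i : Fin n} {I K : List (Fin n)}
    {β : Fin K.length → Fin I.length} :
    Fin.succ ∘ β ∈ subwordEmbeddings (i :: I) K ↔ β ∈ subwordEmbeddings I K := by
  simp [subwordEmbeddings, Fin.strictMono_succ_comp_iff]

theorem cons_zero_mem_subwordEmbeddings_cons {i j : Fin n} {I K : List (Fin n)}
    {γ : Fin K.length → Fin I.length} :
    (Fin.cons 0 (Fin.succ ∘ γ) : Fin (K.length + 1) → Fin (I.length + 1)) ∈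
        subwordEmbeddings (i :: I) (j :: K) ↔ j = i ∧ γ ∈ subwordEmbeddings I K := by
  change (StrictMono (Fin.cons 0 (Fin.succ ∘ γ) : Fin (K.length + 1) → Fin (I.length + 1)) ∧
    ∀ k : Fin (K.length + 1), _ = _) ↔ _
  rw [Fin.strictMono_cons, Fin.forall_fin_succ]
  simp [subwordEmbeddings, Fin.succ_pos, Fin.strictMono_succ_comp_iff, and_left_comm]

theorem chooseCount_cons_cons (i j : Fin n) (I J : List (Fin n)) :
    chooseCount (i :: I) (j :: J) =
      chooseCount I (j :: J) + if j = i then chooseCount I J else 0 := by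
  have h_ne_zero : subwordEmbeddings (i :: I) (j :: J) ∩ {α | α 0 ≠ 0} =
      (Fin.succ ∘ ·) '' subwordEmbeddings I (j :: J) := by
    ext α
    constructor
    · rintro ⟨hα, h0⟩
      obtain ⟨β, rfl⟩ := hα.1.exists_succ_comp_of_ne_zero h0
      exact ⟨β, succ_comp_mem_subwordEmbeddings_cons.1 hα, rfl⟩
    · rintro ⟨β, hβ, rfl⟩
      exact ⟨succ_comp_mem_subwordEmbeddings_cons.2 hβ, Fin.succ_ne_zero _⟩
  have h_zero : (subwordEmbeddings (i :: I) (j :: J) \ {α | α 0 ≠ 0}).ncard =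
      if j = i then chooseCount I J else 0 := by
    have h_cons : ∀ α ∈ subwordEmbeddings (i :: I) (j :: J) \ {α | α 0 ≠ 0},
        ∃ γ ∈ subwordEmbeddings I J, j = i ∧ α = Fin.cons 0 (Fin.succ ∘ γ) := by
      rintro α ⟨hα, h0⟩
      obtain ⟨γ, rfl⟩ := hα.1.exists_cons_zero_succ_comp (not_not.1 h0)
      obtain ⟨hji, hγ⟩ := cons_zero_mem_subwordEmbeddings_cons.1 hα
      exact ⟨γ, hγ, hji, rfl⟩
    split_ifs with hji
    · subst hji
      rw [chooseCount_eq_ncard, ← Set.ncard_image_of_injective _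
        ((Fin.cons_right_injective (α := fun _ => Fin (I.length + 1)) 0).comp
          (Fin.succ_injective _).comp_left)]
      congr 1
      ext α
      constructor
      · intro hα
        obtain ⟨γ, hγ, -, rfl⟩ := h_cons α hα
        exact ⟨γ, hγ, rfl⟩
      · rintro ⟨γ, hγ, rfl⟩
        exact ⟨cons_zero_mem_subwordEmbeddings_cons.2 ⟨rfl, hγ⟩, by simp⟩
    · refine (Set.ncard_eq_zero).2 <| Set.eq_empty_of_forall_notMem fun α hα => ?_
      obtain ⟨-, -, hji', -⟩ := h_cons α hα
      exact hji hji'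
  rw [chooseCount_eq_ncard, ← Set.ncard_inter_add_ncard_sdiff_eq_ncard _ {α | α 0 ≠ 0},
    h_ne_zero, Set.ncard_image_of_injective _ (Fin.succ_injective _).comp_left, h_zero]
  rfl

section WprodSub

variable {M : Type*} [CommMonoid M]

def wprodSub (w : Fin n → M) (I J : List (Fin n)) : M :=
  (((I : Multiset (Fin n)) - J).map w).prod

theorem diffProd_eq_wprodSub (p q : Fin n → ℂ) (I J : List (Fin n)) :
    diffProd p q I J = wprodSub (fun i => q i - p i) I J := rfl

@[simp]
theorem wprodSub_nil_left (w : Fin n → M) (K : List (Fin n)) : wprodSub w [] K = 1 := by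
  simp [wprodSub]

@[simp]
theorem wprodSub_nil_right (w : Fin n → M) (I : List (Fin n)) :
    wprodSub w I [] = (I.map w).prod := by
  simp [wprodSub]

theorem wprodSub_cons_of_le (w : Fin n → M) (i : Fin n) {I K : List (Fin n)}
    (h : (K : Multiset (Fin n)) ≤ I) : wprodSub w (i :: I) K = w i * wprodSub w I K := by
  rw [wprodSub, ← Multiset.cons_coe, Multiset.cons_sub_of_le _ h, Multiset.map_cons,
    Multiset.prod_cons, wprodSub]

@[simp]
theorem wprodSub_cons_cons (w : Fin n → M) (i : Fin n) (I K : List (Fin n)) :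
    wprodSub w (i :: I) (i :: K) = wprodSub w I K := by
  rw [wprodSub, ← Multiset.cons_coe, ← Multiset.cons_coe, Multiset.sub_cons,
    Multiset.erase_cons_head, wprodSub]

theorem norm_wprodSub {𝕜 : Type*} [NormedField 𝕜] (w : Fin n → 𝕜) (I J : List (Fin n)) :
    ‖wprodSub w I J‖ = wprodSub (fun i => ‖w i‖) I J := by
  simp [wprodSub, List.norm_prod, List.map_map, Function.comp_def]

theorem norm_wprod (w : Fin n → ℂ) (I : List (Fin n)) :
    ‖wprod w I‖ = (I.map fun i => ‖w i‖).prod := by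
  simp [wprod, List.norm_prod, List.map_map, Function.comp_def]

theorem wprodSub_nonneg {w : Fin n → ℝ} (hw : ∀ i, 0 ≤ w i) (I J : List (Fin n)) :
    0 ≤ wprodSub w I J :=
  Multiset.prod_nonneg fun _ hx => by
    obtain ⟨i, -, rfl⟩ := Multiset.mem_map.1 hx
    exact hw i

end WprodSub

section Semiring

variable {R : Type*} [CommSemiring R]

theorem chooseCount_mul_wprodSub_cons (w : Fin n → R) (i : Fin n) (I K : List (Fin n)) :
    (chooseCount I K : R) * wprodSub w (i :: I) K =
      w i * ((chooseCount I K : R) * wprodSub w I K) := by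
  by_cases h : chooseCount I K = 0
  · simp [h]
  · rw [wprodSub_cons_of_le w i (coe_le_coe_of_chooseCount_ne_zero h)]
    ring

theorem chooseCount_cons_mul_wprodSub_cons (w : Fin n → R) (i : Fin n) (I K : List (Fin n)) :
    (chooseCount (i :: I) K : R) * wprodSub w (i :: I) K =
      w i * ((chooseCount I K : R) * wprodSub w I K) +
        if K.head? = some i then (chooseCount I K.tail : R) * wprodSub w I K.tail else 0 := by
  cases K with
  | nil => simp [chooseCount_nil_right]
  | cons k K =>
    rw [chooseCount_cons_cons, Nat.cast_add, add_mul, chooseCount_mul_wprodSub_cons]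
    by_cases hki : k = i
    · subst hki
      simp
    · simp [hki]

variable [TopologicalSpace R]

theorem summable_of_chooseCount_eq_zero (I : List (Fin n)) {f : List (Fin n) → R}
    (hf : ∀ K, chooseCount I K = 0 → f K = 0) : Summable f :=
  summable_of_hasFiniteSupport <| (finite_support_chooseCount I).subset fun K hK h0 =>
    hK (hf K h0)

variable [IsTopologicalSemiring R] [T2Space R]

theorem tsum_chooseCount_cons_mul (w : Fin n → R) (i : Fin n) (I : List (Fin n))
    (g : List (Fin n) → R) :
    ∑' K, (chooseCount (i :: I) K : R) * wprodSub w (i :: I) K * g K =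
      w i * ∑' K, (chooseCount I K : R) * wprodSub w I K * g K +
        ∑' K, (chooseCount I K : R) * wprodSub w I K * g (i :: K) := by
  set h : List (Fin n) → R := fun K =>
    (if K.head? = some i then (chooseCount I K.tail : R) * wprodSub w I K.tail else 0) * g K
  have h_cons : ∀ K, h (i :: K) = (chooseCount I K : R) * wprodSub w I K * g (i :: K) := by
    simp [h]
  have h_supp : ∀ K ∉ Set.range (List.cons i), h K = 0 := by
    rintro (_ | ⟨k, K⟩) hK
    · simp [h]
    · have hki : k ≠ i := by rintro rfl; exact hK ⟨K, rfl⟩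
      simp [h, hki]
  have h_summable : Summable h := by
    refine (List.cons_injective.summable_iff h_supp).1 ?_
    simp only [Function.comp_def, h_cons]
    exact summable_of_chooseCount_eq_zero I fun K h0 => by simp [h0]
  have h_reindex : ∑' K, h K = ∑' K, (chooseCount I K : R) * wprodSub w I K * g (i :: K) := by
    rw [← List.cons_injective.tsum_eq fun K hK => not_not.1 fun hK' => hK (h_supp K hK')]
    simp only [h_cons]
  calc ∑' K, (chooseCount (i :: I) K : R) * wprodSub w (i :: I) K * g K
      = ∑' K, (w i * ((chooseCount I K : R) * wprodSub w I K * g K) + h K) := by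
        refine tsum_congr fun K => ?_
        rw [chooseCount_cons_mul_wprodSub_cons]
        ring
    _ = _ := by
        have h_summable_I : Summable fun K => (chooseCount I K : R) * wprodSub w I K * g K :=
          summable_of_chooseCount_eq_zero I fun K h0 => by simp [h0]
        rw [Summable.tsum_add (h_summable_I.mul_left _) h_summable,
          h_summable_I.tsum_mul_left, h_reindex]

theorem tsum_chooseCount_mul_chooseCount (u v : Fin n → R) (I J : List (Fin n)) :
    ∑' K, (chooseCount I K : R) * wprodSub u I K * ((chooseCount K J : R) * wprodSub v K J) =
      (chooseCount I J : R) * wprodSub (u + v) I J := by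
  induction I generalizing J with
  | nil =>
    rw [tsum_eq_single []]
    · simp [chooseCount_nil_right]
    · intro K hK
      have h0 : chooseCount [] K = 0 := by
        by_contra h0
        exact hK (List.sublist_nil.1 (List.Sublist.of_chooseCount_ne_zero h0))
      simp [h0]
  | cons i I ih =>
    have h_summable (f : List (Fin n) → R) :
        Summable fun K => (chooseCount I K : R) * wprodSub u I K * f K :=
      summable_of_chooseCount_eq_zero I fun K h0 => by simp [h0]
    have h_cons (K : List (Fin n)) :
        (chooseCount I K : R) * wprodSub u I K *
            ((chooseCount (i :: K) J : R) * wprodSub v (i :: K) J) =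
          v i * ((chooseCount I K : R) * wprodSub u I K *
              ((chooseCount K J : R) * wprodSub v K J)) +
            if J.head? = some i then (chooseCount I K : R) * wprodSub u I K *
              ((chooseCount K J.tail : R) * wprodSub v K J.tail) else 0 := by
      rw [chooseCount_cons_mul_wprodSub_cons]
      split_ifs <;> ring
    rw [tsum_chooseCount_cons_mul, tsum_congr h_cons, Summable.tsum_add ((h_summable _).mul_left _),
      (h_summable _).tsum_mul_left, ih, chooseCount_cons_mul_wprodSub_cons]
    · split_ifs
      · rw [ih]
        simp only [Pi.add_apply]
        ring
      · simp only [Pi.add_apply, tsum_zero]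
        ring
    · split_ifs
      · exact h_summable _
      · exact summable_zero

end Semiring

theorem chooseCount_mul_wprodSub_mul_prod_le {u v : Fin n → ℝ} (hu : ∀ i, 0 ≤ u i)
    (hv : ∀ i, 0 ≤ v i) (I J : List (Fin n)) :
    (chooseCount I J : ℝ) * wprodSub u I J * (J.map v).prod ≤ (I.map (u + v)).prod := by
  have h_binomial := tsum_chooseCount_mul_chooseCount u v I []
  simp only [chooseCount_nil_right, Nat.cast_one, one_mul, wprodSub_nil_right] at h_binomial
  rw [← h_binomial]
  have h_summable : Summable fun K => (chooseCount I K : ℝ) * wprodSub u I K * (K.map v).prod :=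
    summable_of_chooseCount_eq_zero I fun K h0 => by simp [h0]
  refine h_summable.le_tsum J fun K _ => ?_
  exact mul_nonneg (mul_nonneg (Nat.cast_nonneg _) (wprodSub_nonneg hu I K))
    (List.prod_nonneg fun x hx => by obtain ⟨i, -, rfl⟩ := List.mem_map.1 hx; exact hv i)

theorem summable_chooseCount_mul_wprodSub {c : List (Fin n) → ℝ} {w t : Fin n → ℝ}
    (hc : ∀ I, 0 ≤ c I) (hw : ∀ i, 0 ≤ w i) (ht : ∀ i, 0 < t i)
    (h : Summable fun I => c I * (I.map (w + t)).prod) (J : List (Fin n)) :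
    Summable fun I => (chooseCount I J : ℝ) * c I * wprodSub w I J := by
  have h_tJ : 0 < (J.map t).prod :=
    List.prod_pos fun x hx => by obtain ⟨i, -, rfl⟩ := List.mem_map.1 hx; exact ht i
  refine Summable.of_nonneg_of_le (fun I => ?_) (fun I => ?_) (h.mul_left (J.map t).prod⁻¹)
  · exact mul_nonneg (mul_nonneg (Nat.cast_nonneg _) (hc I)) (wprodSub_nonneg hw I J)
  · rw [le_inv_mul_iff₀ h_tJ]
    calc (J.map t).prod * ((chooseCount I J : ℝ) * c I * wprodSub w I J)
        = c I * ((chooseCount I J : ℝ) * wprodSub w I J * (J.map t).prod) := by ring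
      _ ≤ c I * (I.map (w + t)).prod :=
        mul_le_mul_of_nonneg_left
          (chooseCount_mul_wprodSub_mul_prod_le hw (fun i => (ht i).le) I J) (hc I)

theorem summable_chooseCount_mul_wprodSub_of_lt {c : List (Fin n) → ℝ} {r w : Fin n → ℝ}
    (hc : ∀ I, 0 ≤ c I) (hw0 : ∀ i, 0 ≤ w i) (hw : ∀ i, w i < r i)
    (h : ∀ ρ : Fin n → ℝ, (∀ i, 0 ≤ ρ i) → (∀ i, ρ i < r i) →
      Summable fun I => c I * (I.map ρ).prod) (J : List (Fin n)) :
    Summable fun I => (chooseCount I J : ℝ) * c I * wprodSub w I J := by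
  refine summable_chooseCount_mul_wprodSub (t := fun i => (r i - w i) / 2) hc hw0
    (fun i => by linarith [hw i]) (h _ (fun i => ?_) (fun i => ?_)) J
  · simp only [Pi.add_apply]; linarith [hw0 i, hw i]
  · simp only [Pi.add_apply]; linarith [hw i]

theorem Complex.exists_norm_eq_and_norm_add_eq (x : ℂ) {v : ℝ} (hv : 0 ≤ v) :
    ∃ y : ℂ, ‖y‖ = v ∧ ‖x + y‖ = ‖x‖ + v := by
  refine ⟨v * exp (arg x * I), by simp [abs_of_nonneg hv], ?_⟩
  calc ‖x + v * exp (arg x * I)‖ = ‖((‖x‖ + v : ℝ) : ℂ) * exp (arg x * I)‖ := by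
        rw [ofReal_add, add_mul, norm_mul_exp_arg_mul_I]
    _ = ‖x‖ + v := by
        rw [norm_mul, norm_exp_ofReal_mul_I, mul_one, norm_real,
          Real.norm_of_nonneg (by positivity)]

/-- Moving `q` in coordinate `i` by `‖s i - q i‖` in the direction of `q i - p i` stays inside
`P(q, r')`, and puts the point at distance `‖q i - p i‖ + ‖s i - q i‖` from `p`. -/
theorem norm_sub_add_norm_sub_lt {p q s : Fin n → ℂ} {r r' : Fin n → ℝ}
    (hsub : ∀ z : Fin n → ℂ, (∀ i, ‖z i - q i‖ < r' i) → ∀ i, ‖z i - p i‖ < r i)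
    (hs : ∀ i, ‖s i - q i‖ < r' i) (i : Fin n) : ‖q i - p i‖ + ‖s i - q i‖ < r i := by
  obtain ⟨y, hy, hy_add⟩ :=
    Complex.exists_norm_eq_and_norm_add_eq (q i - p i) (norm_nonneg (s i - q i))
  have hz (j : Fin n) : ‖Function.update q i (q i + y) j - q j‖ < r' j := by
    rcases eq_or_ne j i with rfl | hj
    · simpa [hy] using hs j
    · simpa [hj] using (norm_nonneg _).trans_lt (hs j)
  simpa [← hy_add, add_sub_right_comm] using hsub _ hz i

theorem reExp_reExp_of_summable (a : List (Fin n) → ℂ) (p q s : Fin n → ℂ)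
    (h : ∀ J, Summable fun I => (chooseCount I J : ℝ) * ‖a I‖ *
      wprodSub (fun i => ‖q i - p i‖ + ‖s i - q i‖) I J) :
    reExp q s (reExp p q a) = reExp p s a := by
  funext J
  set g : List (Fin n) → List (Fin n) → ℂ := fun I K =>
    (chooseCount K J : ℂ) * diffProd q s K J * ((chooseCount I K : ℂ) * a I * diffProd p q I K)
  have h_norm (I K : List (Fin n)) : ‖g I K‖ = ‖a I‖ *
      ((chooseCount I K : ℝ) * wprodSub (fun i => ‖q i - p i‖) I K *
        ((chooseCount K J : ℝ) * wprodSub (fun i => ‖s i - q i‖) K J)) := by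
    simp only [g, norm_mul, Complex.norm_natCast, diffProd_eq_wprodSub, norm_wprodSub]
    ring
  have h_summable : Summable (Function.uncurry g) := by
    refine Summable.of_norm <|
      (summable_prod_of_nonneg fun _ => norm_nonneg _).2 ⟨fun I => ?_, ?_⟩
    · exact summable_of_chooseCount_eq_zero I fun K h0 => by simp [h_norm, h0]
    · refine (h J).congr fun I => ?_
      simp only [Function.uncurry_apply_pair, h_norm, tsum_mul_left,
        tsum_chooseCount_mul_chooseCount, Pi.add_def]
      ring
  calc reExp q s (reExp p q a) J = ∑' K, ∑' I, g I K := by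
        refine tsum_congr fun K => ?_
        rw [reExp, mul_right_comm, ← tsum_mul_left]
    _ = ∑' I, ∑' K, g I K := h_summable.tsum_comm
    _ = reExp p s a J := tsum_congr fun I => by
        have h_telescope : (fun i => q i - p i) + (fun i => s i - q i) = fun i => s i - p i := by
          funext i
          simp
        calc ∑' K, g I K
            = a I * ∑' K, (chooseCount I K : ℂ) * wprodSub (fun i => q i - p i) I K *
                ((chooseCount K J : ℂ) * wprodSub (fun i => s i - q i) K J) := by
              rw [← tsum_mul_left]
              exact tsum_congr fun K => by simp only [g, diffProd_eq_wprodSub]; ring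
          _ = (chooseCount I J : ℂ) * a I * diffProd p s I J := by
              rw [tsum_chooseCount_mul_chooseCount, h_telescope, diffProd_eq_wprodSub]
              ring

theorem reexpansion_cocycle_general {n : ℕ}
    (a : List (Fin n) → ℂ) (p : Fin n → ℂ) (r : Fin n → ℝ)
    (hconv : ∀ z : Fin n → ℂ, (∀ i, ‖z i - p i‖ < r i) →
      Summable (fun I : List (Fin n) =>
        ‖a I‖ * ‖wprod (fun i => z i - p i) I‖))
    (q : Fin n → ℂ) (r' : Fin n → ℝ)
    (hsub : ∀ z : Fin n → ℂ, (∀ i, ‖z i - q i‖ < r' i) →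
      ∀ i, ‖z i - p i‖ < r i)
    (s : Fin n → ℂ) (r'' : Fin n → ℝ) (hr'' : ∀ i, 0 < r'' i)
    (hsub' : ∀ z : Fin n → ℂ, (∀ i, ‖z i - s i‖ < r'' i) →
      ∀ i, ‖z i - q i‖ < r' i) :
    reExp q s (reExp p q a) = reExp p s a := by
  have hs : ∀ i, ‖s i - q i‖ < r' i := hsub' s fun i => by simpa using hr'' i
  have h_polydisc (ρ : Fin n → ℝ) (hρ0 : ∀ i, 0 ≤ ρ i) (hρ : ∀ i, ρ i < r i) :
      Summable fun I => ‖a I‖ * (I.map ρ).prod := by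
    refine (hconv (fun i => p i + ρ i) fun i => ?_).congr fun I => ?_
    · simpa [Real.norm_of_nonneg (hρ0 i)] using hρ i
    · simp [norm_wprod, Real.norm_of_nonneg (hρ0 _)]
  exact reExp_reExp_of_summable a p q s fun J =>
    summable_chooseCount_mul_wprodSub_of_lt (fun I => norm_nonneg _) (fun i => by positivity)
      (norm_sub_add_norm_sub_lt hsub hs) h_polydisc J

/-- cocycle property of re-expansion: if `f` converges on
`P(p,r)`, `P(q,r') ⊆ P(p,r)` and `P(s,r'') ⊆ P(q,r')`, then
`α(q,s) ∘ α(p,q) = α(p,s)` on such `f`. -/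
theorem reexpansion_cocycle {n : ℕ}
    (a : List (Fin n) → ℂ) (p : Fin n → ℂ) (r : Fin n → ℝ)
    (hr : ∀ i, 0 < r i)
    (hconv : ∀ z : Fin n → ℂ, (∀ i, ‖z i - p i‖ < r i) →
      Summable (fun I : List (Fin n) =>
        ‖a I‖ * ‖wprod (fun i => z i - p i) I‖))
    (q : Fin n → ℂ) (r' : Fin n → ℝ) (hr' : ∀ i, 0 < r' i)
    (hsub : ∀ z : Fin n → ℂ, (∀ i, ‖z i - q i‖ < r' i) →
      ∀ i, ‖z i - p i‖ < r i)
    (s : Fin n → ℂ) (r'' : Fin n → ℝ) (hr'' : ∀ i, 0 < r'' i)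
    (hsub' : ∀ z : Fin n → ℂ, (∀ i, ‖z i - s i‖ < r'' i) →
      ∀ i, ‖z i - q i‖ < r' i) :
    reExp q s (reExp p q a) = reExp p s a :=
  reexpansion_cocycle_general a p r hconv q r' hsub s r'' hr'' hsub'
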